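/- Let V be a 3-dimensional real vector space with nondegenerate symmetric bilinear form g, v ∈ V non-null (⟨v,v⟩ ≠ 0), q ≠ 0, and G(a,b) = q(⟨v,a⟩⟨v,b⟩ - (1/2)⟨v,v⟩ g(a,b)) - Λ g(a,b). Then tr(G³) - related combination: (1/3)·tr(G)·tr(G²) - tr(G³) = (4/3) q² ⟨v,v⟩² Λ, where traces are of the g-raised endomorphism. -/

import Mathlib

open Matrix

/-!
Write `w = g v`, `c = ⟨v,v⟩` and `μ = qc/2 + Λ`. Raising an index turns `G` into
`P = q (v wᵀ) - μ·1`, and `A = v wᵀ` satisfies `A² = c A`, `tr A = c`. Hence `P` behaves like a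
diagonal matrix with eigenvalues `λ₁ = qc - μ` (once) and `λ₂ = -μ` (twice), so that
`(1/3) tr P tr P² - tr P³ = -(2/3) (λ₁ - λ₂)² (λ₁ + λ₂)`, with `λ₁ - λ₂ = qc` and `λ₁ + λ₂ = -2Λ`.
-/

namespace Matrix

variable {n R : Type*} [Fintype n] [CommRing R]

theorem vecMulVec_mul_self (v w : n → R) :
    vecMulVec v w * vecMulVec v w = (v ⬝ᵥ w) • vecMulVec v w := by
  rw [vecMulVec_mul_vecMulVec, vecMulVec_smul, dotProduct_comm]

variable [DecidableEq n]

theorem exists_smul_add_smul_one_pow {A : Matrix n n R} {c : R} (hA : A * A = c • A)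
    (s t : R) (k : ℕ) :
    ∃ α : R, (s • A + t • 1) ^ k = α • A + t ^ k • 1 ∧ α * c = (s * c + t) ^ k - t ^ k := by
  induction k with
  | zero => exact ⟨0, by simp, by simp⟩
  | succ k ih =>
    obtain ⟨α, hpow, hα⟩ := ih
    refine ⟨α * (s * c + t) + s * t ^ k, ?_, ?_⟩
    · rw [pow_succ, hpow, add_mul, mul_add, mul_add, smul_mul_smul_comm, smul_mul_smul_comm,
        smul_mul_smul_comm, smul_mul_smul_comm, hA, Matrix.mul_one, Matrix.one_mul,
        Matrix.one_mul, smul_smul]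
      module
    · linear_combination (s * c + t) * hα

theorem trace_smul_add_smul_one_pow {A : Matrix n n R} {c : R} (hA : A * A = c • A)
    (htr : A.trace = c) (s t : R) (k : ℕ) :
    ((s • A + t • 1) ^ k).trace = (s * c + t) ^ k + (Fintype.card n - 1) * t ^ k := by
  obtain ⟨α, hpow, hα⟩ := exists_smul_add_smul_one_pow hA s t k
  rw [hpow, trace_add, trace_smul, trace_smul, htr, trace_one, smul_eq_mul, smul_eq_mul, hα]
  ring

end Matrix

theorem stmt12_general (g G : Matrix (Fin 3) (Fin 3) ℝ) (hdet : IsUnit g.det)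
    (v : Fin 3 → ℝ) (q Λ : ℝ)
    (hG : ∀ a b, G a b =
      q * ((g *ᵥ v) a * (g *ᵥ v) b - (1/2) * (v ⬝ᵥ (g *ᵥ v)) * g a b) - Λ * g a b) :
    (1/3) * (g⁻¹ * G).trace * ((g⁻¹ * G) ^ 2).trace - ((g⁻¹ * G) ^ 3).trace
      = (4/3) * q ^ 2 * (v ⬝ᵥ (g *ᵥ v)) ^ 2 * Λ := by
  set w := g *ᵥ v
  set c := v ⬝ᵥ w
  set μ := q * c / 2 + Λ
  have hG_matrix : G = q • vecMulVec w w + (-μ) • g := by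
    ext a b
    simp only [hG a b, Matrix.add_apply, Matrix.smul_apply, vecMulVec_apply, smul_eq_mul, μ]
    ring
  have hraise : g⁻¹ * G = q • vecMulVec v w + (-μ) • 1 := by
    rw [hG_matrix, Matrix.mul_add, Matrix.mul_smul, Matrix.mul_smul, nonsing_inv_mul g hdet,
      mul_vecMulVec, mulVec_mulVec, nonsing_inv_mul g hdet, one_mulVec]
  have htrace (k : ℕ) : ((g⁻¹ * G) ^ k).trace = (q * c - μ) ^ k + 2 * (-μ) ^ k := by
    rw [hraise, trace_smul_add_smul_one_pow (vecMulVec_mul_self v w) (trace_vecMulVec v w)]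
    push_cast [Fintype.card_fin]
    ring
  have htrace_one := htrace 1
  rw [pow_one] at htrace_one
  rw [htrace_one, htrace 2, htrace 3]
  ring

/-- With `G(a,b) = q(⟨v,a⟩⟨v,b⟩ - (1/2)⟨v,v⟩ g(a,b)) - Λ g(a,b)` and
`G₁, G₂, G₃` the traces of the first three powers of its g-raised endomorphism,
`(1/3) G₁ G₂ - G₃ = (4/3) q² ⟨v,v⟩² Λ`. -/
theorem stmt12 (g G : Matrix (Fin 3) (Fin 3) ℝ) (hg : g.IsSymm) (hdet : IsUnit g.det)
    (v : Fin 3 → ℝ) (q Λ : ℝ) (hv : v ⬝ᵥ (g *ᵥ v) ≠ 0) (hq : q ≠ 0)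
    (hG : ∀ a b, G a b =
      q * ((g *ᵥ v) a * (g *ᵥ v) b - (1/2) * (v ⬝ᵥ (g *ᵥ v)) * g a b) - Λ * g a b) :
    (1/3) * (g⁻¹ * G).trace * ((g⁻¹ * G) ^ 2).trace - ((g⁻¹ * G) ^ 3).trace
      = (4/3) * q ^ 2 * (v ⬝ᵥ (g *ᵥ v)) ^ 2 * Λ :=
  stmt12_general g G hdet v q Λ hG
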